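/- Let X and Y be geometric data sets, (Z, F_Z) a feature space, ν a Borel probability measure on Z, and φ : Z → X, ψ : Z → Y maps such that F_X ∘ φ ⊆ F_Z, F_Y ∘ ψ ⊆ F_Z, φ_*ν = μ_X, and ψ_*ν = μ_Y. Then d_conc(X,Y) ≤ H_{d_KF^ν}(F_X ∘ φ, F_Y ∘ ψ). -/

import Mathlib

open MeasureTheory Topology Filter ENNReal

noncomputable section

/-- The Ky Fan (extended) pseudometric between two maps, w.r.t. a measure `π`:
`inf {ε ≥ 0 | π {ω | d (u ω) (v ω) > ε} ≤ ε}`. -/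
def kyFan {Ω E : Type*} [MeasurableSpace Ω] [PseudoEMetricSpace E]
    (π : Measure Ω) (u v : Ω → E) : ℝ≥0∞ :=
  sInf {ε : ℝ≥0∞ | π {ω | ε < edist (u ω) (v ω)} ≤ ε}

/-- Hausdorff distance between two sets w.r.t. an abstract extended pseudometric `d`. -/
def hausd {α : Type*} (d : α → α → ℝ≥0∞) (A B : Set α) : ℝ≥0∞ :=
  max (⨆ a : A, ⨅ b : B, d a b) (⨆ b : B, ⨅ a : A, d a b)

/-- The sup (extended) pseudometric `d∞^A` over a subset `A`. -/
def dInfty {α β : Type*} [PseudoEMetricSpace β] (A : Set α) (u v : α → β) : ℝ≥0∞ :=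
  ⨆ a : A, edist (u a) (v a)

/-- A geometric data set: a complete separable metric space whose distance is the
supremum of feature differences over a nonempty family `F` of real-valued functions,
equipped with a fully supported Borel probability measure. -/
structure GDS where
  carrier : Type
  met : MetricSpace carrier
  cms : CompleteSpace carrier
  sep : TopologicalSpace.SeparableSpace carrier
  msp : MeasurableSpace carrier
  bor : BorelSpace carrier
  F : Set (carrier → ℝ)
  F_nonempty : F.Nonempty
  dist_isLUB : ∀ x y : carrier, IsLUB ((fun f => |f x - f y|) '' F) (dist x y)
  μ : Measure carrier
  prob : IsProbabilityMeasure μ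
  full_support : ∀ U : Set carrier, IsOpen U → U.Nonempty → 0 < μ U

attribute [instance] GDS.met GDS.cms GDS.sep GDS.msp GDS.bor GDS.prob

/-- A coupling of the measures of two geometric data sets. -/
def GDS.Coupling (X Y : GDS) (π : Measure (X.carrier × Y.carrier)) : Prop :=
  IsProbabilityMeasure π ∧ π.map Prod.fst = X.μ ∧ π.map Prod.snd = Y.μ

/-- A parameter of a measure `μ`: a Borel measurable map from `[0,1]` (with Lebesgue
measure) pushing the Lebesgue measure forward to `μ`. -/
def IsParam {X : Type*} [MeasurableSpace X] (μ : Measure X)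
    (φ : Set.Icc (0:ℝ) 1 → X) : Prop :=
  Measurable φ ∧ Measure.map φ volume = μ

/-- The observable distance between two geometric data sets. -/
def dConc (X Y : GDS) : ℝ≥0∞ :=
  ⨅ (φ : Set.Icc (0:ℝ) 1 → X.carrier) (_ : IsParam X.μ φ)
    (ψ : Set.Icc (0:ℝ) 1 → Y.carrier) (_ : IsParam Y.μ ψ),
    hausd (kyFan (volume : Measure (Set.Icc (0:ℝ) 1)))
      ((· ∘ φ) '' X.F) ((· ∘ ψ) '' Y.F)

/-- `d_conc^π`, the Hausdorff distance w.r.t. the Ky Fan metric of a coupling `π`. -/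
def dConcCoupling (X Y : GDS) (π : Measure (X.carrier × Y.carrier)) : ℝ≥0∞ :=
  hausd (kyFan π) ((· ∘ Prod.fst) '' X.F) ((· ∘ Prod.snd) '' Y.F)

/-- The Prohorov distance between two Borel measures. -/
def prohorov {Z : Type*} [PseudoEMetricSpace Z] [MeasurableSpace Z]
    (μ ν : Measure Z) : ℝ≥0∞ :=
  sInf {ε : ℝ≥0∞ | ∀ A : Set Z, MeasurableSet A →
    ν A ≤ μ {z | EMetric.infEdist z A < ε} + ε}

/-- The `a`-partial diameter of a Borel measure on `ℝ`. -/
def partialDiam (ν : Measure ℝ) (a : ℝ≥0∞) : ℝ≥0∞ :=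
  ⨅ (I : Set ℝ) (_ : MeasurableSet I) (_ : a ≤ ν I), EMetric.diam I

/-- The `κ`-observable diameter `ObsDiam(X; -κ)` of a geometric data set. -/
def obsDiam (X : GDS) (κ : ℝ) : ℝ≥0∞ :=
  ⨆ f : X.F, partialDiam (X.μ.map f) (ENNReal.ofReal (1 - κ))

/-- The distortion of a subset `S ⊆ X × Y`. -/
def distortion {X Y : Type*} [PseudoMetricSpace X] [PseudoMetricSpace Y]
    (S : Set (X × Y)) : ℝ≥0∞ :=
  ⨆ (p : S) (q : S), edist (dist p.1.1 q.1.1) (dist p.1.2 q.1.2)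

/-- `□_π^S(F, G) = max {1 - π S, 2 H_{d∞^S}(F ∘ pr₁, G ∘ pr₂)}`. -/
def boxS (X Y : GDS) (π : Measure (X.carrier × Y.carrier))
    (S : Set (X.carrier × Y.carrier))
    (F : Set (X.carrier → ℝ)) (G : Set (Y.carrier → ℝ)) : ℝ≥0∞ :=
  max (1 - π S) (2 * hausd (dInfty S) ((· ∘ Prod.fst) '' F) ((· ∘ Prod.snd) '' G))

/-- `□_π(F, G)`, infimum of `□_π^S(F, G)` over closed `S`. -/
def boxCoupling (X Y : GDS) (π : Measure (X.carrier × Y.carrier))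
    (F : Set (X.carrier → ℝ)) (G : Set (Y.carrier → ℝ)) : ℝ≥0∞ :=
  ⨅ (S : Set (X.carrier × Y.carrier)) (_ : IsClosed S), boxS X Y π S F G

/-- The box distance between two geometric data sets. -/
def boxDist (X Y : GDS) : ℝ≥0∞ :=
  ⨅ (π : Measure (X.carrier × Y.carrier)) (_ : X.Coupling Y π),
    boxCoupling X Y π X.F Y.F

/-- The distortion `dis π` of a coupling `π`. -/
def disCoupling (X Y : GDS) (π : Measure (X.carrier × Y.carrier)) : ℝ≥0∞ :=
  ⨅ (S : Set (X.carrier × Y.carrier)) (_ : IsClosed S), max (1 - π S) (distortion S)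

/-- `X ⪯ Y` : the geometric data set `Y` dominates `X` (feature order). -/
def GDS.Dominates (Y X : GDS) : Prop :=
  ∃ p : Y.carrier → X.carrier, Measurable p ∧ Y.μ.map p = X.μ ∧
    (· ∘ p) '' X.F ⊆ closure Y.F

/-!
Push `ν` forward along `z ↦ (φ z, ψ z)` to a probability measure on the standard Borel space
`X × Y`, and realise it as the image of Lebesgue measure on `[0, 1]` under some `Θ`. The
coordinates of `Θ` are parameters of `μ_X` and `μ_Y`, and since Ky Fan distances only depend on
the joint law of the two maps, the Hausdorff distance computed through `Θ` equals the one
computed through `ν`.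
-/

section KyFan

variable {Ω Ω' Ω'' E : Type*} [MeasurableSpace Ω] [MeasurableSpace Ω'] [MeasurableSpace Ω'']
  [PseudoEMetricSpace E] [MeasurableSpace E] [OpensMeasurableSpace E] [SecondCountableTopology E]

theorem kyFan_map (π : Measure Ω) {Θ : Ω → Ω'} (hΘ : AEMeasurable Θ π) {u v : Ω' → E}
    (hu : Measurable u) (hv : Measurable v) :
    kyFan (π.map Θ) u v = kyFan π (u ∘ Θ) (v ∘ Θ) := by
  refine congrArg sInf (Set.ext fun ε => ?_)
  have hs : MeasurableSet {ω' | ε < edist (u ω') (v ω')} :=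
    measurableSet_lt measurable_const (hu.edist hv)
  rw [Set.mem_ofPred_eq, Set.mem_ofPred_eq, Measure.map_apply_of_aemeasurable hΘ hs]
  rfl

theorem kyFan_comp_eq_of_map_eq {π₁ : Measure Ω} {π₂ : Measure Ω''} {Θ₁ : Ω → Ω'}
    {Θ₂ : Ω'' → Ω'} (hΘ₁ : AEMeasurable Θ₁ π₁) (hΘ₂ : AEMeasurable Θ₂ π₂)
    (h : π₁.map Θ₁ = π₂.map Θ₂) {u v : Ω' → E} (hu : Measurable u) (hv : Measurable v) :
    kyFan π₁ (u ∘ Θ₁) (v ∘ Θ₁) = kyFan π₂ (u ∘ Θ₂) (v ∘ Θ₂) := by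
  rw [← kyFan_map π₁ hΘ₁ hu hv, h, kyFan_map π₂ hΘ₂ hu hv]

end KyFan

section Hausdorff

variable {ι κ α : Type*}

theorem hausd_image_image (d : α → α → ℝ≥0∞) (F : Set ι) (G : Set κ) (m : ι → α) (n : κ → α) :
    hausd d (m '' F) (n '' G) =
      max (⨆ f ∈ F, ⨅ g ∈ G, d (m f) (n g)) (⨆ g ∈ G, ⨅ f ∈ F, d (m f) (n g)) := by
  simp only [hausd, iSup_subtype, iInf_subtype, iSup_image, iInf_image]

theorem hausd_image_image_congr {β : Type*} {d : α → α → ℝ≥0∞} {d' : β → β → ℝ≥0∞}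
    {F : Set ι} {G : Set κ} {m : ι → α} {n : κ → α} {m' : ι → β} {n' : κ → β}
    (h : ∀ f ∈ F, ∀ g ∈ G, d (m f) (n g) = d' (m' f) (n' g)) :
    hausd d (m '' F) (n '' G) = hausd d' (m' '' F) (n' '' G) := by
  rw [hausd_image_image, hausd_image_image]
  congr 1 <;> refine biSup_congr fun _ h₁ => biInf_congr fun _ h₂ => ?_
  exacts [h _ h₁ _ h₂, h _ h₂ _ h₁]

end Hausdorff

theorem IsParam.map {α β : Type*} [MeasurableSpace α] [MeasurableSpace β] {μ : Measure α}
    {Θ : Set.Icc (0:ℝ) 1 → α} (hΘ : IsParam μ Θ) {p : α → β} (hp : Measurable p) :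
    IsParam (μ.map p) (p ∘ Θ) :=
  ⟨hp.comp hΘ.1, by rw [← Measure.map_map hp hΘ.1, hΘ.2]⟩

theorem dConc_le_of_isParam {X Y : GDS} {φ : Set.Icc (0:ℝ) 1 → X.carrier}
    {ψ : Set.Icc (0:ℝ) 1 → Y.carrier} (hφ : IsParam X.μ φ) (hψ : IsParam Y.μ ψ) :
    dConc X Y ≤ hausd (kyFan volume) ((· ∘ φ) '' X.F) ((· ∘ ψ) '' Y.F) :=
  iInf₂_le_of_le φ hφ <| iInf₂_le ψ hψ

theorem GDS.lipschitzWith_of_mem_F (X : GDS) {f : X.carrier → ℝ} (hf : f ∈ X.F) :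
    LipschitzWith 1 f :=
  LipschitzWith.of_dist_le_mul fun x y => by
    simpa [Real.dist_eq] using (X.dist_isLUB x y).1 ⟨f, hf, rfl⟩

theorem GDS.measurable_of_mem_F (X : GDS) {f : X.carrier → ℝ} (hf : f ∈ X.F) : Measurable f :=
  (X.lipschitzWith_of_mem_F hf).continuous.measurable

theorem dConc_le_hausd_of_featureSpace_general (X Y : GDS) (Z : Type)
    [MeasurableSpace Z]
    (ν : Measure Z) [IsProbabilityMeasure ν]
    (φ : Z → X.carrier) (ψ : Z → Y.carrier)
    (hφm : Measurable φ) (hψm : Measurable ψ)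
    (hφν : ν.map φ = X.μ) (hψν : ν.map ψ = Y.μ) :
    dConc X Y ≤ hausd (kyFan ν) ((· ∘ φ) '' X.F) ((· ∘ ψ) '' Y.F) := by
  have : Nonempty X.carrier := nonempty_of_isProbabilityMeasure X.μ
  have : Nonempty Y.carrier := nonempty_of_isProbabilityMeasure Y.μ
  have hpair : Measurable fun z => (φ z, ψ z) := hφm.prodMk hψm
  set π := ν.map fun z => (φ z, ψ z)
  have : IsProbabilityMeasure π := Measure.isProbabilityMeasure_map hpair.aemeasurable
  obtain ⟨Θ, hΘm, hΘ⟩ := π.exists_measurable_map_eq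
  have hΘp : IsParam π Θ := ⟨hΘm, hΘ⟩
  have hπX : π.map Prod.fst = X.μ := (Measure.map_map measurable_fst hpair).trans hφν
  have hπY : π.map Prod.snd = Y.μ := (Measure.map_map measurable_snd hpair).trans hψν
  have hφp : IsParam X.μ (Prod.fst ∘ Θ) := hπX ▸ hΘp.map measurable_fst
  have hψp : IsParam Y.μ (Prod.snd ∘ Θ) := hπY ▸ hΘp.map measurable_snd
  refine (dConc_le_of_isParam hφp hψp).trans_eq (hausd_image_image_congr fun f hf g hg => ?_)
  have h := kyFan_comp_eq_of_map_eq hΘm.aemeasurable hpair.aemeasurable hΘ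
    ((X.measurable_of_mem_F hf).comp measurable_fst) ((Y.measurable_of_mem_F hg).comp measurable_snd)
  rwa [Function.comp_assoc, Function.comp_assoc] at h

/-- If a feature space `(Z, F_Z)` with a Borel probability measure `ν`
maps onto `X` and `Y` compatibly with features and measures, then
`d_conc(X,Y) ≤ H_{d_KF^ν}(F_X ∘ φ, F_Y ∘ ψ)`. -/
theorem dConc_le_hausd_of_featureSpace (X Y : GDS) (Z : Type) [MetricSpace Z]
    [MeasurableSpace Z] [BorelSpace Z]
    (FZ : Set (Z → ℝ)) (hFZne : FZ.Nonempty)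
    (hFZ : ∀ z w : Z, IsLUB ((fun f => |f z - f w|) '' FZ) (dist z w))
    (ν : Measure Z) [IsProbabilityMeasure ν]
    (φ : Z → X.carrier) (ψ : Z → Y.carrier)
    (hφm : Measurable φ) (hψm : Measurable ψ)
    (hφF : (· ∘ φ) '' X.F ⊆ FZ) (hψF : (· ∘ ψ) '' Y.F ⊆ FZ)
    (hφν : ν.map φ = X.μ) (hψν : ν.map ψ = Y.μ) :
    dConc X Y ≤ hausd (kyFan ν) ((· ∘ φ) '' X.F) ((· ∘ ψ) '' Y.F) :=
  dConc_le_hausd_of_featureSpace_general X Y Z ν φ ψ hφm hψm hφν hψν
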